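/- arXiv:2601.17943 — 3 statements merged into one kernel-verified Lean document; each statement's English description precedes it below -/
import Mathlib

section
/- Let G be a finite strongly connected digraph in which every directed edge lies on a directed triangle, and suppose every directed closed walk in G has length divisible by 3. Fix a vertex v0 and define c(w) ∈ ZMod 3 as the length modulo 3 of any directed walk from v0 to w. Then c is well-defined and satisfies c(w) = c(u) + 1 for every directed edge (u,w); consequently the underlying undirected graph of G is 3-colorable. -/
/-- A directed walk of length `n` from `u` to `w` along the edge relation `E`. -/
def DWalk {V : Type*} (E : V → V → Prop) (u w : V) (n : ℕ) : Prop :=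
  ∃ f : ℕ → V, f 0 = u ∧ f n = w ∧ ∀ i < n, E (f i) (f (i + 1))

/-- A directed closed walk of (positive) length `n` through `v`. -/
def ClosedWalk {V : Type*} (E : V → V → Prop) (v : V) (n : ℕ) : Prop :=
  n ≠ 0 ∧ DWalk E v v n

/-- A digraph is strongly connected if any vertex reaches any other by a directed walk. -/
def StronglyConnected {V : Type*} (E : V → V → Prop) : Prop :=
  ∀ u w : V, ∃ n : ℕ, DWalk E u w n

/-- `p` is the period of `v`: the gcd of the lengths of all directed closed walks through `v`. -/
def IsPeriod {V : Type*} (E : V → V → Prop) (v : V) (p : ℕ) : Prop :=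
  (∀ n, ClosedWalk E v n → p ∣ n) ∧ ∀ d : ℕ, (∀ n, ClosedWalk E v n → d ∣ n) → d ∣ p

lemma DWalk.append' {V : Type*} {E : V → V → Prop} {u w x : V} {n m : ℕ}
    (h1 : DWalk E u w n) (h2 : DWalk E w x m) : DWalk E u x (n + m) := by
  obtain ⟨f, hf0, hfn, hf⟩ := h1
  obtain ⟨g, hg0, hgm, hg⟩ := h2
  refine ⟨fun i => if i ≤ n then f i else g (i - n), by simp [hf0], ?_, ?_⟩
  · by_cases h : n + m ≤ n
    · have hm : m = 0 := by omega
      subst hm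
      simp only [Nat.add_zero, le_refl, if_true, hfn, ← hg0, hgm]
    · simp only [h, if_false]
      have : n + m - n = m := by omega
      rw [this, hgm]
  · intro i hi
    by_cases h : i + 1 ≤ n
    · have hi' : i ≤ n := by omega
      simp only [h, hi', if_true]
      exact hf i (by omega)
    · simp only [h, if_false]
      by_cases h' : i ≤ n
      · have hin : i = n := by omega
        subst hin
        simp only [h', if_true, hfn, ← hg0]
        have : i + 1 - i = 0 + 1 := by omega
        rw [this]
        exact hg 0 (by omega)
      · simp only [h', if_false]
        have h1 : i + 1 - n = (i - n) + 1 := by omega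
        rw [h1]
        exact hg (i - n) (by omega)

theorem stmt8 {V : Type*} [Fintype V] (E : V → V → Prop)
    (hloop : ∀ v : V, ¬ E v v) (hsc : StronglyConnected E)
    (htri : ∀ u w : V, E u w → ∃ x : V, E w x ∧ E x u)
    (hdiv : ∀ (v : V) (n : ℕ), ClosedWalk E v n → 3 ∣ n) (v0 : V) :
    ∃ c : V → ZMod 3, c v0 = 0 ∧
      (∀ (w : V) (n : ℕ), DWalk E v0 w n → c w = (n : ZMod 3)) ∧
      (∀ u w : V, E u w → c w = c u + 1) ∧
      (∀ u w : V, (E u w ∨ E w u) → c u ≠ c w) := by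
  -- any closed walk (possibly length 0) has length divisible by 3
  have hclosed : ∀ (v : V) (k : ℕ), DWalk E v v k → (k : ZMod 3) = 0 := by
    intro v k hk
    rcases Nat.eq_zero_or_pos k with h | h
    · simp [h]
    · have := hdiv v k ⟨by omega, hk⟩
      exact (ZMod.natCast_eq_zero_iff k 3).2 this
  set c : V → ZMod 3 := fun w => ((hsc v0 w).choose : ZMod 3) with hc
  have key : ∀ (w : V) (n : ℕ), DWalk E v0 w n → c w = (n : ZMod 3) := by
    intro w n hn
    obtain ⟨m, hm⟩ := hsc w v0
    have h1 : (((hsc v0 w).choose + m : ℕ) : ZMod 3) = 0 :=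
      hclosed v0 _ ((hsc v0 w).choose_spec.append' hm)
    have h2 : ((n + m : ℕ) : ZMod 3) = 0 := hclosed v0 _ (hn.append' hm)
    push_cast at h1 h2
    have : ((hsc v0 w).choose : ZMod 3) = (n : ZMod 3) := by
      have := h1.trans h2.symm
      exact add_right_cancel this
    exact this
  have edge1 : ∀ u w : V, E u w → DWalk E u w 1 := by
    intro u w huw
    refine ⟨fun i => if i = 0 then u else w, by simp, by simp, ?_⟩
    intro i hi
    interval_cases i
    simpa using huw
  have hedge : ∀ u w : V, E u w → c w = c u + 1 := by
    intro u w huw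
    have h1 := (hsc v0 u).choose_spec
    have h2 := h1.append' (edge1 u w huw)
    have := key w _ h2
    rw [this]
    push_cast
    rfl
  refine ⟨c, ?_, key, hedge, ?_⟩
  · have : DWalk E v0 v0 0 := ⟨fun _ => v0, rfl, rfl, by omega⟩
    simpa using key v0 0 this
  · intro u w h
    have one_ne : (1 : ZMod 3) ≠ 0 := by decide
    rcases h with h | h
    · rw [hedge u w h]
      intro hcontra
      exact one_ne (by linear_combination -hcontra)
    · rw [hedge w u h]
      intro hcontra
      exact one_ne (by linear_combination hcontra)
end

section
/- The triangulated torus graph T(k,m) with vertex set (ZMod k) × (ZMod m), where (i,j) is adjacent to (i±1,j), (i,j±1), (i+1,j-1) and (i-1,j+1), is properly 3-colorable if and only if 3 divides k and 3 divides m (for k, m ≥ 3). -/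
/-!
In a proper 3-coloring with colors in `ZMod 3`, the three colors of a triangle are distinct and so
sum to `0`. Comparing the two triangles of a unit rhombus gives `C (x + u + v) = C x`, and then the
triangle at `x + u` shows that the colors along every row form an arithmetic progression with
nonzero common difference. Going once around a row of length `k` forces `k • c = 0`, i.e. `3 ∣ k`.
Conversely, `(i, j) ↦ i - j` (mod 3) is a proper coloring when `3 ∣ k` and `3 ∣ m`.
-/

/-- Adjacency of the triangulated torus graph on `ZMod k × ZMod m`. -/
def TAdj (k m : ℕ) (p q : ZMod k × ZMod m) : Prop :=
  (q.1 - p.1, q.2 - p.2) ∈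
    ({(1, 0), (-1, 0), (0, 1), (0, -1), (1, -1), (-1, 1)} : Set (ZMod k × ZMod m))

theorem ZMod.three_add_add_eq_zero_of_ne :
    ∀ {a b c : ZMod 3}, a ≠ b → a ≠ c → b ≠ c → a + b + c = 0 := by
  decide

theorem ZMod.three_dvd_of_nsmul_eq_zero {k : ℕ} {c : ZMod 3} (hc : c ≠ 0) (h : k • c = 0) :
    3 ∣ k := by
  rw [nsmul_eq_mul, mul_eq_zero, ZMod.natCast_eq_zero_iff] at h
  exact h.resolve_right hc

theorem ZMod.nsmul_sub_eq_zero_of_sub_add_one {G : Type*} [AddCommGroup G] {k : ℕ}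
    (g : ZMod k → G) (h : ∀ i, g (i + 1 + 1) - g (i + 1) = g (i + 1) - g i) :
    k • (g 1 - g 0) = 0 := by
  have hstep : ∀ n : ℕ, g (n + 1) - g n = g 1 - g 0 := by
    intro n
    induction n with
    | zero => simp
    | succ n ih => rw [Nat.cast_succ, h, ih]
  have hsum : ∀ n : ℕ, g n - g 0 = n • (g 1 - g 0) := by
    intro n
    induction n with
    | zero => simp
    | succ n ih => rw [succ_nsmul, ← ih, ← hstep n, Nat.cast_succ]; abel
  simpa using (hsum k).symm

section TriangleColoring

variable {A : Type*} [AddCommGroup A] {C : A → ZMod 3} {u v : A}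
  (hu : ∀ x, C x ≠ C (x + u)) (hv : ∀ x, C x ≠ C (x + v)) (huv : ∀ x, C (x + u) ≠ C (x + v))
include hu hv huv

theorem color_add_add_eq (x : A) : C (x + u + v) = C x := by
  have hup := ZMod.three_add_add_eq_zero_of_ne (hu x) (hv x) (huv x)
  have hdown := ZMod.three_add_add_eq_zero_of_ne (huv x) (hv (x + u))
    (add_right_comm x u v ▸ hu (x + v))
  linear_combination hdown - hup

theorem color_sub_add_one_eq (x : A) : C (x + u + u) - C (x + u) = C (x + u) - C x := by
  have h := ZMod.three_add_add_eq_zero_of_ne (hu (x + u)) (hv (x + u)) (huv (x + u))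
  rw [color_add_add_eq hu hv huv] at h
  have h3 : (3 : ZMod 3) = 0 := rfl
  linear_combination h - C (x + u) * h3

theorem three_dvd_of_coloring_along {k : ℕ} (ι : ZMod k → A) (hι : ∀ i, ι (i + 1) = ι i + u) :
    3 ∣ k := by
  have hι₁ : ι 1 = ι 0 + u := by simpa using hι 0
  refine ZMod.three_dvd_of_nsmul_eq_zero (c := C (ι 1) - C (ι 0)) ?_ ?_
  · rw [hι₁]
    exact sub_ne_zero.mpr (hu (ι 0)).symm
  · refine ZMod.nsmul_sub_eq_zero_of_sub_add_one (C ∘ ι) fun i => ?_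
    simp only [Function.comp_apply, hι]
    exact color_sub_add_one_eq hu hv huv (ι i)

end TriangleColoring

theorem castHom_sub_castHom_ne_of_tAdj {k m : ℕ} (hk : 3 ∣ k) (hm : 3 ∣ m)
    {p q : ZMod k × ZMod m} (hpq : TAdj k m p q) :
    ZMod.castHom hk (ZMod 3) p.1 - ZMod.castHom hm (ZMod 3) p.2 ≠
      ZMod.castHom hk (ZMod 3) q.1 - ZMod.castHom hm (ZMod 3) q.2 := by
  intro heq
  have hdiff : ZMod.castHom hk (ZMod 3) (q.1 - p.1) - ZMod.castHom hm (ZMod 3) (q.2 - p.2) = 0 := by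
    rw [map_sub, map_sub]
    linear_combination -heq
  simp only [TAdj, Set.mem_insert_iff, Set.mem_singleton_iff, Prod.mk.injEq] at hpq
  rcases hpq with ⟨h₁, h₂⟩ | ⟨h₁, h₂⟩ | ⟨h₁, h₂⟩ | ⟨h₁, h₂⟩ | ⟨h₁, h₂⟩ | ⟨h₁, h₂⟩ <;>
    rw [h₁, h₂] at hdiff <;> simp only [map_one, map_neg, map_zero] at hdiff <;>
    revert hdiff <;> decide

theorem stmt10_general (k m : ℕ) :
    (∃ col : ZMod k × ZMod m → Fin 3,
        ∀ p q : ZMod k × ZMod m, TAdj k m p q → col p ≠ col q) ↔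
      (3 ∣ k ∧ 3 ∣ m) := by
  constructor
  · -- `Fin 3` is `ZMod 3` by definition, so `col` is read as a `ZMod 3`-valued coloring.
    rintro ⟨col, hcol⟩
    have hu : ∀ x, col x ≠ col (x + (1, 0)) := fun x => hcol _ _ (by simp [TAdj])
    have hv : ∀ x, col x ≠ col (x + (0, 1)) := fun x => hcol _ _ (by simp [TAdj])
    have huv : ∀ x, col (x + (1, 0)) ≠ col (x + (0, 1)) := fun x => hcol _ _ (by simp [TAdj])
    exact ⟨three_dvd_of_coloring_along (C := col) hu hv huv (fun i => (i, 0)) (by simp),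
      three_dvd_of_coloring_along (C := col) hv hu (fun x => (huv x).symm) (fun j => (0, j))
        (by simp)⟩
  · rintro ⟨hk, hm⟩
    exact ⟨fun p => ZMod.castHom hk (ZMod 3) p.1 - ZMod.castHom hm (ZMod 3) p.2,
      fun p q => castHom_sub_castHom_ne_of_tAdj hk hm⟩

theorem stmt10 (k m : ℕ) (hk : 3 ≤ k) (hm : 3 ≤ m) :
    (∃ col : ZMod k × ZMod m → Fin 3,
        ∀ p q : ZMod k × ZMod m, TAdj k m p q → col p ≠ col q) ↔
      (3 ∣ k ∧ 3 ∣ m) :=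
  stmt10_general k m
end

section
/- For k,m ≥ 3, if at least one of k, m is not divisible by 3, then the triangulated torus graph T(k,m) is not properly 3-colorable. -/
theorem stmt12 (k m : ℕ) (hk : 3 ≤ k) (hm : 3 ≤ m) (h : ¬ (3 ∣ k) ∨ ¬ (3 ∣ m)) :
    ¬ ∃ col : ZMod k × ZMod m → Fin 3,
        ∀ p q : ZMod k × ZMod m, TAdj k m p q → col p ≠ col q := by
  rintro ⟨col, hcol⟩
  set c : ZMod k × ZMod m → ZMod 3 := fun p => ((col p : ℕ) : ZMod 3) with hc
  have hne : ∀ p q, TAdj k m p q → c p ≠ c q := by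
    intro p q hadj hEq
    apply hcol p q hadj
    have hv := congrArg ZMod.val hEq
    simp only [hc, ZMod.val_natCast_of_lt (col p).isLt,
      ZMod.val_natCast_of_lt (col q).isLt] at hv
    exact Fin.ext hv
  have adjh : ∀ (p d : ZMod k × ZMod m),
      d ∈ ({(1, 0), (-1, 0), (0, 1), (0, -1), (1, -1), (-1, 1)} :
        Set (ZMod k × ZMod m)) → TAdj k m p (p + d) := by
    intro p d hd
    simpa [TAdj, add_sub_cancel_left] using hd
  have padd : ∀ (p u v w : ZMod k × ZMod m), u + v = w → p + u + v = p + w := by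
    intro p u v w huv; rw [add_assoc, huv]
  have e1 : (1, 0) + (-1, 1) = ((0, 1) : ZMod k × ZMod m) := by
    simp [Prod.ext_iff]
  have e2 : (1, 0) + (0, 1) = ((1, 1) : ZMod k × ZMod m) := by
    simp [Prod.ext_iff]
  have e3 : (1, 1) + (-1, 0) = ((0, 1) : ZMod k × ZMod m) := by
    simp [Prod.ext_iff]
  have e4 : (0, 1) + (1, 0) = ((1, 1) : ZMod k × ZMod m) := by
    simp [Prod.ext_iff]
  have tri : ∀ x y z : ZMod 3, x ≠ y → x ≠ z → y ≠ z → x + y + z = 0 := by decide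
  have h3 : (3 : ZMod 3) = 0 := by decide
  have tsum : ∀ p, c p + c (p + (1, 0)) + c (p + (0, 1)) = 0 := by
    intro p
    refine tri _ _ _ (hne _ _ (adjh p (1, 0) (by simp)))
      (hne _ _ (adjh p (0, 1) (by simp))) ?_
    have := hne _ _ (adjh (p + (1, 0)) (-1, 1) (by simp))
    rwa [padd p (1, 0) (-1, 1) (0, 1) e1] at this
  have tsum2 : ∀ p, c (p + (1, 0)) + c (p + (1, 1)) + c (p + (0, 1)) = 0 := by
    intro p
    refine tri _ _ _ ?_ ?_ ?_
    · have := hne _ _ (adjh (p + (1, 0)) (0, 1) (by simp))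
      rwa [padd p (1, 0) (0, 1) (1, 1) e2] at this
    · have := hne _ _ (adjh (p + (1, 0)) (-1, 1) (by simp))
      rwa [padd p (1, 0) (-1, 1) (0, 1) e1] at this
    · have := hne _ _ (adjh (p + (1, 1)) (-1, 0) (by simp))
      rwa [padd p (1, 1) (-1, 0) (0, 1) e3] at this
  have diag : ∀ p, c (p + (1, 1)) = c p := by
    intro p
    linear_combination tsum2 p - tsum p
  have shift1 : ∀ p, c (p + (1, 0) + (1, 0)) - c (p + (1, 0)) = c (p + (1, 0)) - c p := by
    intro p
    have T := tsum (p + (1, 0))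
    rw [padd p (1, 0) (0, 1) (1, 1) e2] at T
    linear_combination T - diag p - c (p + (1, 0)) * h3
  have shift2 : ∀ p, c (p + (0, 1) + (0, 1)) - c (p + (0, 1)) = c (p + (0, 1)) - c p := by
    intro p
    have T := tsum (p + (0, 1))
    rw [padd p (0, 1) (1, 0) (1, 1) e4] at T
    linear_combination T - diag p - c (p + (0, 1)) * h3
  -- generic linearity along a direction
  have lin : ∀ (e : ZMod k × ZMod m),
      (∀ p, c (p + e + e) - c (p + e) = c (p + e) - c p) →
      ∀ n : ℕ, c (n • e) = c 0 + (n : ZMod 3) * (c e - c 0) := by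
    intro e hs
    have step : ∀ n : ℕ, c ((n + 1) • e) - c (n • e) = c e - c 0 := by
      intro n
      induction n with
      | zero => simp
      | succ n ih =>
        have := hs (n • e)
        rw [show n • e + e = (n + 1) • e from (succ_nsmul e n).symm] at this
        rw [show (n + 1) • e + e = (n + 1 + 1) • e from (succ_nsmul e (n + 1)).symm] at this
        rw [this]; exact ih
    intro n
    induction n with
    | zero => simp
    | succ n ih =>
      have := step n
      push_cast
      linear_combination this + ih
  haveI : Fact (Nat.Prime 3) := ⟨by norm_num⟩
  have key : ∀ (e : ZMod k × ZMod m) (n : ℕ), n • e = 0 →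
      e ∈ ({(1, 0), (-1, 0), (0, 1), (0, -1), (1, -1), (-1, 1)} :
        Set (ZMod k × ZMod m)) →
      (∀ p, c (p + e + e) - c (p + e) = c (p + e) - c p) → (3 : ℕ) ∣ n := by
    intro e n hn he hs
    have hl := lin e hs n
    rw [hn] at hl
    have hd : c e - c 0 ≠ 0 := by
      have := hne 0 (0 + e) (adjh 0 e he)
      rw [zero_add] at this
      exact sub_ne_zero.mpr (Ne.symm this)
    have : (n : ZMod 3) = 0 := by
      rcases mul_eq_zero.mp (by linear_combination -hl : (n : ZMod 3) * (c e - c 0) = 0) with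
        h' | h'
      · exact h'
      · exact absurd h' hd
    exact (ZMod.natCast_eq_zero_iff n 3).mp this
  have hk3 : (3 : ℕ) ∣ k := by
    refine key (1, 0) k ?_ (by simp) shift1
    have : (k : ZMod k) = 0 := ZMod.natCast_self k
    simp [Prod.smul_mk, nsmul_eq_mul, this]
  have hm3 : (3 : ℕ) ∣ m := by
    refine key (0, 1) m ?_ (by simp) shift2
    have : (m : ZMod m) = 0 := ZMod.natCast_self m
    simp [Prod.smul_mk, nsmul_eq_mul, this]
  rcases h with h | h
  · exact h hk3
  · exact h hm3
end
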